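/- arXiv:1909.10187 — 2 statements merged into one kernel-verified Lean document; each statement's English description precedes it below -/
import Mathlib

section
/- Let d and g be complex numbers with d ≠ 0 and g ≠ 0, let τ > 0 be real, and suppose g·e^{t·d} ≠ 1 for every t ∈ [0, τ]. Then the iterated integral ∫₀^τ ∫₀^t ((g·e^{s·d} − 1)/(g·e^{t·d} − 1))² · e^{d(t−s)} ds dt equals (2τ·d·g + g² − 1)/(d²·g·(g·e^{τd} − 1)) + (τ·d·g − g − 1)/(d²·g). -/
/-!
With `E = e^{td}`, the integrand `(g e^{sd} - 1)² e^{d(t-s)} = e^{td} (g² e^{sd} - 2g + e^{-sd})`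
has an elementary antiderivative in `s`, which evaluates the inner integral `f̂₁`. Dividing by
`(gE - 1)²`, the result `f̂₁(t)` is in turn the derivative of the closed form of `f̂₀`, which
vanishes at `t = 0`.
-/

open Complex intervalIntegral Set

lemma hasDerivAt_cexp_ofReal_mul (d : ℂ) (x : ℝ) :
    HasDerivAt (fun t : ℝ => cexp (t * d)) (d * cexp (x * d)) x := by
  simpa [mul_comm] using ((hasDerivAt_id (x : ℂ)).mul_const d).cexp.comp_ofReal

lemma integral_sq_sub_one_mul_cexp {d : ℂ} (hd : d ≠ 0) (g : ℂ) (t : ℝ) :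
    ∫ s in (0:ℝ)..t, (g * cexp (s * d) - 1) ^ 2 * cexp (d * (t - s)) =
      (g ^ 2 * cexp (t * d) * (cexp (t * d) - 1) - 2 * g * t * d * cexp (t * d)
        + cexp (t * d) - 1) / d := by
  have hF : ∀ s : ℝ, HasDerivAt
      (fun s : ℝ => cexp (t * d) * (g ^ 2 * cexp (s * d) / d - 2 * g * s - cexp (s * -d) / d))
      ((g * cexp (s * d) - 1) ^ 2 * cexp (d * (t - s))) s := by
    intro s
    have hs : HasDerivAt (fun s : ℝ => (s : ℂ)) 1 s := ofRealCLM.hasDerivAt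
    refine (((((hasDerivAt_cexp_ofReal_mul d s).const_mul (g ^ 2)).div_const d).sub
      (hs.const_mul (2 * g))).sub ((hasDerivAt_cexp_ofReal_mul (-d) s).div_const d)).const_mul
      _ |>.congr_deriv ?_
    have hsplit : cexp (d * (t - s)) = cexp (t * d) / cexp (s * d) := by
      rw [← Complex.exp_sub]; ring_nf
    rw [hsplit, mul_neg, Complex.exp_neg]
    field_simp
    ring
  rw [integral_eq_sub_of_hasDerivAt (fun s _ => hF s)
    (Continuous.intervalIntegrable (by fun_prop) _ _)]
  simp only [ofReal_zero, zero_mul, mul_neg, Complex.exp_neg, Complex.exp_zero]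
  field_simp
  ring

/-- The closed forms of the paper's `f̂₁(t, k)` and `f̂₀(t, k)`, with `d = d(k)`, `g = g(k)`. -/
noncomputable def f1Closed (d g : ℂ) (t : ℝ) : ℂ :=
  (g ^ 2 * cexp (t * d) * (cexp (t * d) - 1) - 2 * g * t * d * cexp (t * d) + cexp (t * d) - 1)
    / (d * (g * cexp (t * d) - 1) ^ 2)

noncomputable def f0Closed (d g : ℂ) (t : ℝ) : ℂ :=
  (2 * t * d * g + g ^ 2 - 1) / (d ^ 2 * g * (g * cexp (t * d) - 1))
    + (t * d * g - g - 1) / (d ^ 2 * g)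

-- No hypothesis on `g e^{td}`: where it equals `1`, both sides are `0` by division by zero.
lemma integral_sq_div_mul_cexp_eq_f1Closed {d : ℂ} (hd : d ≠ 0) (g : ℂ) (t : ℝ) :
    ∫ s in (0:ℝ)..t, ((g * cexp (s * d) - 1) / (g * cexp (t * d) - 1)) ^ 2 * cexp (d * (t - s)) =
      f1Closed d g t := by
  simp_rw [div_pow, div_mul_eq_mul_div]
  rw [intervalIntegral.integral_div, integral_sq_sub_one_mul_cexp hd, div_div, f1Closed]

lemma continuousAt_f1Closed {d : ℂ} (hd : d ≠ 0) {g : ℂ} {t : ℝ} (ht : g * cexp (t * d) ≠ 1) :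
    ContinuousAt (f1Closed d g) t := by
  have : d * (g * cexp (t * d) - 1) ^ 2 ≠ 0 := mul_ne_zero hd (pow_ne_zero _ (sub_ne_zero.2 ht))
  unfold f1Closed
  fun_prop (disch := exact this)

lemma hasDerivAt_f0Closed {d g : ℂ} (hd : d ≠ 0) (hg : g ≠ 0) {t : ℝ}
    (ht : g * cexp (t * d) ≠ 1) : HasDerivAt (f0Closed d g) (f1Closed d g t) t := by
  have hu : g * cexp (t * d) - 1 ≠ 0 := sub_ne_zero.2 ht
  have hs : HasDerivAt (fun s : ℝ => (s : ℂ)) 1 t := ofRealCLM.hasDerivAt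
  have hnum : HasDerivAt (fun s : ℝ => 2 * s * d * g + g ^ 2 - 1) (2 * d * g) t := by
    simpa using ((((hs.const_mul 2).mul_const d).mul_const g).add_const (g ^ 2)).sub_const 1
  have hden := (((hasDerivAt_cexp_ofReal_mul d t).const_mul g).sub_const 1).const_mul (d ^ 2 * g)
  have hlin := ((((hs.mul_const d).mul_const g).sub_const g).sub_const 1).div_const (d ^ 2 * g)
  refine ((hnum.div hden (by simp [hd, hg, hu])).add hlin).congr_deriv ?_
  unfold f1Closed
  generalize cexp (t * d) = E at hu ⊢
  field_simp
  ring

lemma f0Closed_zero (d : ℂ) {g : ℂ} (hg : g ≠ 1) : f0Closed d g 0 = 0 := by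
  have : g ^ 2 - 1 = (g + 1) * (g - 1) := by ring
  simp only [f0Closed, ofReal_zero, mul_zero, zero_mul, zero_add, Complex.exp_zero, mul_one, this,
    mul_div_mul_right _ _ (sub_ne_zero.2 hg)]
  ring

/-- Closed-form evaluation of the iterated integral `f̂₀(τ,k) = ∫₀^τ f̂₁(t,k) dt`
from Theorem 3.1: for complex `d ≠ 0`, `g ≠ 0`, real `τ > 0` with
`g·e^{td} ≠ 1` for all `t ∈ [0, τ]`,
`∫₀^τ ∫₀^t ((g e^{sd} − 1)/(g e^{td} − 1))² e^{d(t−s)} ds dt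
  = (2τdg + g² − 1)/(d²g(g e^{τd} − 1)) + (τdg − g − 1)/(d²g)`. -/
theorem f0_closed_form (d g : ℂ) (hd : d ≠ 0) (hg0 : g ≠ 0) (τ : ℝ) (hτ : 0 < τ)
    (hg : ∀ t ∈ Set.Icc (0:ℝ) τ, g * Complex.exp ((t : ℂ) * d) ≠ 1) :
    (∫ t in (0:ℝ)..τ, ∫ s in (0:ℝ)..t,
        ((g * Complex.exp ((s : ℂ) * d) - 1) / (g * Complex.exp ((t : ℂ) * d) - 1)) ^ 2
          * Complex.exp (d * ((t : ℂ) - (s : ℂ))))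
      = (2 * (τ : ℂ) * d * g + g ^ 2 - 1)
            / (d ^ 2 * g * (g * Complex.exp ((τ : ℂ) * d) - 1))
          + ((τ : ℂ) * d * g - g - 1) / (d ^ 2 * g) := by
  have hne : ∀ t ∈ uIcc 0 τ, g * cexp (t * d) ≠ 1 := fun t ht => hg t (uIcc_of_le hτ.le ▸ ht)
  calc _ = ∫ t in (0:ℝ)..τ, f1Closed d g t :=
        integral_congr fun t _ => integral_sq_div_mul_cexp_eq_f1Closed hd g t
    _ = f0Closed d g τ - f0Closed d g 0 :=
        integral_eq_sub_of_hasDerivAt (fun t ht => hasDerivAt_f0Closed hd hg0 (hne t ht))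
          (ContinuousOn.intervalIntegrable fun t ht =>
            (continuousAt_f1Closed hd (hne t ht)).continuousWithinAt)
    _ = _ := by
      rw [f0Closed_zero d (by simpa using hne 0 left_mem_uIcc), sub_zero, f0Closed]
end

section
/- Let κ > 0, τ₀ > 0, and θ, y, z be real numbers. For ε > 0 with κε ≠ 1 define a₁^ε = (ε/τ₀)(1 − e^{−τ₀/ε}), A = (1/(κτ₀))(1 − e^{−κτ₀}), a₂^ε = A + (A − a₁^ε)/(1 − κε), and set a₂* = 2A. Then the function ε ↦ [a₁^ε·y + a₂^ε·z + (2 − a₁^ε − a₂^ε)·θ] − [a₂*·z + (2 − a₂*)·θ] − [a₁^ε·(y − z) + (ε/τ₀)(1 − e^{−κτ₀})·(z − θ)] is O(ε²) as ε → 0⁺. -/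
open Real Filter Asymptotics

/-!
Write `a = a₁^ε` and `δ = κε`. Since `(ε/τ₀)(1 − e^{−κτ₀}) = Aδ`, the residual collapses to the
single product `(Aδ − a) · δ · (1 − δ)⁻¹ · (z − θ)`. Here `Aδ − a = O(ε)` because `a₁^ε` is `ε/τ₀`
times a quantity in `[0, 1]`, `δ = O(ε)`, and `(1 − δ)⁻¹ → 1`; hence the product is `O(ε²)`.
-/

lemma abs_one_sub_exp_neg_le_one {x : ℝ} (hx : 0 ≤ x) : |1 - exp (-x)| ≤ 1 := by
  have hpos : 0 < exp (-x) := exp_pos _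
  have hle : exp (-x) ≤ 1 := exp_le_one_iff.mpr (neg_nonpos.mpr hx)
  rw [abs_le]
  constructor <;> linarith

lemma isBigO_div_mul_one_sub_exp_neg_div {τ : ℝ} (hτ : 0 ≤ τ) :
    (fun ε : ℝ => ε / τ * (1 - exp (-τ / ε))) =O[nhdsWithin 0 (Set.Ioi 0)] fun ε => ε := by
  have hbounded : (fun ε : ℝ => 1 - exp (-τ / ε)) =O[nhdsWithin 0 (Set.Ioi 0)] fun _ => (1 : ℝ) := by
    refine IsBigO.of_bound 1 ?_
    filter_upwards [self_mem_nhdsWithin] with ε (hε : 0 < ε)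
    rw [norm_one, mul_one, Real.norm_eq_abs, neg_div]
    exact abs_one_sub_exp_neg_le_one (div_nonneg hτ hε.le)
  simpa only [div_eq_mul_inv, mul_comm _ τ⁻¹, mul_one] using
    ((isBigO_refl (fun ε : ℝ => ε) _).const_mul_left τ⁻¹).mul hbounded

lemma isBigO_inv_one_sub_const_mul (c : ℝ) :
    (fun ε : ℝ => (1 - c * ε)⁻¹) =O[nhds 0] fun _ => (1 : ℝ) := by
  have hlim : Tendsto (fun ε : ℝ => (1 - c * ε)⁻¹) (nhds 0) (nhds (1 - c * 0)⁻¹) :=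
    ((continuous_const.sub (continuous_const.mul continuous_id)).tendsto 0).inv₀ (by simp)
  exact hlim.isBigO_one ℝ

lemma two_factor_vix_sq_residual_eq {a A δ y z θ : ℝ} (hδ : δ ≠ 1) :
    (a * y + (A + (A - a) / (1 - δ)) * z + (2 - a - (A + (A - a) / (1 - δ))) * θ)
        - (2 * A * z + (2 - 2 * A) * θ) - (a * (y - z) + A * δ * (z - θ))
      = (A * δ - a) * δ * (1 - δ)⁻¹ * (z - θ) := by
  have h : 1 - δ ≠ 0 := sub_ne_zero.mpr hδ.symm
  field_simp
  ring

/-- The expansion `(VIX^ε)² − (VIX^*)² = a₁^ε(y − z) + (ε/τ₀)(1 − e^{−κτ₀})(z − θ) + O(ε²)`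
as `ε → 0⁺`, where `a₁^ε = (ε/τ₀)(1 − e^{−τ₀/ε})`, `A = (1/(κτ₀))(1 − e^{−κτ₀})`,
`a₂^ε = A + (A − a₁^ε)/(1 − κε)`, and `a₂* = 2A`. -/
theorem vix_squared_expansion (κ τ₀ θ y z : ℝ) (hκ : 0 < κ) (hτ₀ : 0 < τ₀)
    (a₁ : ℝ → ℝ) (A : ℝ) (a₂ : ℝ → ℝ) (a₂star : ℝ)
    (ha₁ : ∀ ε : ℝ, 0 < ε → a₁ ε = (ε / τ₀) * (1 - Real.exp (-τ₀ / ε)))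
    (hA : A = (1 / (κ * τ₀)) * (1 - Real.exp (-κ * τ₀)))
    (ha₂ : ∀ ε : ℝ, 0 < ε → κ * ε ≠ 1 → a₂ ε = A + (A - a₁ ε) / (1 - κ * ε))
    (ha₂star : a₂star = 2 * A) :
    (fun ε : ℝ =>
        (a₁ ε * y + a₂ ε * z + (2 - a₁ ε - a₂ ε) * θ)
          - (a₂star * z + (2 - a₂star) * θ)
          - (a₁ ε * (y - z) + (ε / τ₀) * (1 - Real.exp (-κ * τ₀)) * (z - θ)))
      =O[nhdsWithin 0 (Set.Ioi 0)] (fun ε : ℝ => ε ^ 2) := by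
  have hexp (ε : ℝ) : ε / τ₀ * (1 - exp (-κ * τ₀)) = A * (κ * ε) := by
    rw [hA]
    field_simp
  have hsmall : ∀ᶠ ε in nhdsWithin 0 (Set.Ioi 0), κ * ε ≠ 1 :=
    nhdsWithin_le_nhds <| (continuous_const.mul continuous_id).continuousAt.eventually_ne
      (by simp : κ * (0 : ℝ) ≠ 1)
  have hresidual : (fun ε : ℝ =>
        (a₁ ε * y + a₂ ε * z + (2 - a₁ ε - a₂ ε) * θ)
          - (a₂star * z + (2 - a₂star) * θ)
          - (a₁ ε * (y - z) + (ε / τ₀) * (1 - Real.exp (-κ * τ₀)) * (z - θ)))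
      =ᶠ[nhdsWithin 0 (Set.Ioi 0)]
        fun ε => (A * (κ * ε) - a₁ ε) * (κ * ε) * (1 - κ * ε)⁻¹ * (z - θ) := by
    filter_upwards [self_mem_nhdsWithin, hsmall] with ε (hε : 0 < ε) hne
    rw [ha₂ ε hε hne, ha₂star, hexp]
    exact two_factor_vix_sq_residual_eq hne
  have ha₁O : a₁ =O[nhdsWithin 0 (Set.Ioi 0)] fun ε => ε :=
    (isBigO_div_mul_one_sub_exp_neg_div hτ₀.le).congr'
      (eventually_nhdsWithin_of_forall fun ε hε => (ha₁ ε hε).symm) EventuallyEq.rfl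
  have hδO : (fun ε : ℝ => κ * ε) =O[nhdsWithin 0 (Set.Ioi 0)] fun ε => ε :=
    (isBigO_refl _ _).const_mul_left κ
  refine hresidual.trans_isBigO ?_
  simpa only [mul_one, sq] using
    ((((hδO.const_mul_left A).sub ha₁O).mul hδO).mul
      ((isBigO_inv_one_sub_const_mul κ).mono nhdsWithin_le_nhds)).mul
      (isBigO_const_const (z - θ) one_ne_zero _)
end
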